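/- arXiv:0809.1365 — 6 statements merged into one kernel-verified Lean document; each statement's English description precedes it below -/
import Mathlib

section
/- Let I be a connected and locally connected topological space, h : I → ℝ continuous, and suppose h attains its infimum at a point v ∈ I. Then for every x ∈ I and every λ with h(v) ≤ λ ≤ h(x), there exists y ∈ C(x,λ) with h(y) = λ. -/
theorem isClosed_connectedComponentIn' {I : Type*} [TopologicalSpace I] {F : Set I}
    (hF : IsClosed F) (x : I) : IsClosed (connectedComponentIn F x) := by
  by_cases hx : x ∈ F
  · rw [connectedComponentIn_eq_image hx]
    exact hF.isClosedEmbedding_subtypeVal.isClosedMap _ isClosed_connectedComponent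
  · rw [connectedComponentIn_eq_empty hx]
    exact isClosed_empty

/-- On a connected, locally connected space, if `h` attains its infimum at `v`,
then for every `x` and every `λ` with `h v ≤ λ ≤ h x` there is a point `y`
in the contour `C(x,λ)` with `h y = λ`. -/
theorem exists_mem_contour_eq_level
    {I : Type*} [TopologicalSpace I] [ConnectedSpace I] [LocallyConnectedSpace I]
    (h : I → ℝ) (hcont : Continuous h)
    (v : I) (hv : ∀ y, h v ≤ h y)
    (x : I) (lam : ℝ) (h₁ : h v ≤ lam) (h₂ : lam ≤ h x) :
    ∃ y ∈ connectedComponentIn {z | lam ≤ h z} x, h y = lam := by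
  by_contra hcon
  push_neg at hcon
  set S : Set I := {z | lam ≤ h z} with hS
  set C := connectedComponentIn S x with hC
  have hxS : x ∈ S := h₂
  have hxC : x ∈ C := mem_connectedComponentIn hxS
  -- C ⊆ {h > lam}
  have hsub : C ⊆ {z | lam < h z} := by
    intro y hy
    have : lam ≤ h y := connectedComponentIn_subset S x hy
    exact lt_of_le_of_ne this (fun e => hcon y hy e.symm)
  -- C is open: it equals the component of x in the open set {h > lam}
  have hUopen : IsOpen {z | lam < h z} := isOpen_lt continuous_const hcont
  have hxU : x ∈ {z | lam < h z} := hsub hxC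
  have hCeq : C = connectedComponentIn {z | lam < h z} x := by
    apply Set.Subset.antisymm
    · exact isPreconnected_connectedComponentIn.subset_connectedComponentIn hxC hsub
    · exact isPreconnected_connectedComponentIn.subset_connectedComponentIn
        (mem_connectedComponentIn hxU)
        ((connectedComponentIn_subset _ _).trans (fun z (hz : lam < h z) => show lam ≤ h z from le_of_lt hz))
  have hopen : IsOpen C := hCeq ▸ hUopen.connectedComponentIn
  have hclosed : IsClosed C :=
    isClosed_connectedComponentIn' (isClosed_le continuous_const hcont) x
  have huniv : C = Set.univ :=
    (isClopen_iff.mp ⟨hclosed, hopen⟩).resolve_left (Set.nonempty_iff_ne_empty.mp ⟨x, hxC⟩)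
  have : lam < h v := hsub (huniv ▸ Set.mem_univ v)
  exact absurd h₁ (not_le.mpr this)
end

section
/- Let I be a locally connected topological space and h : I → ℝ continuous. If z ∈ C(y,λ) (where λ ≤ h(y)) and h(z) > λ, then z lies in the topological interior of C(y,λ). Consequently, if C(x',λ') ⊆ C(x,λ) with λ' > λ, then C(x,λ) is a neighbourhood of C(x',λ'). -/
/-- In a locally connected space: if `z ∈ C(y,λ)` and `h z > λ` then `z` is in
the interior of `C(y,λ)`; consequently, if `C(x',λ') ⊆ C(x,λ)` with `λ' > λ`,
then `C(x,λ)` is a neighbourhood of `C(x',λ')`. -/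
theorem mem_interior_contour_and_nhdsSet
    {I : Type*} [TopologicalSpace I] [LocallyConnectedSpace I]
    (h : I → ℝ) (hcont : Continuous h) :
    (∀ (y z : I) (lam : ℝ), lam ≤ h y →
      z ∈ connectedComponentIn {w | lam ≤ h w} y → lam < h z →
      z ∈ interior (connectedComponentIn {w | lam ≤ h w} y)) ∧
    (∀ (x x' : I) (lam lam' : ℝ), lam ≤ h x → lam' ≤ h x' → lam < lam' →
      connectedComponentIn {w | lam' ≤ h w} x' ⊆
        connectedComponentIn {w | lam ≤ h w} x →
      connectedComponentIn {w | lam ≤ h w} x ∈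
        nhdsSet (connectedComponentIn {w | lam' ≤ h w} x')) := by
  have key : ∀ (y z : I) (lam : ℝ), lam ≤ h y →
      z ∈ connectedComponentIn {w | lam ≤ h w} y → lam < h z →
      z ∈ interior (connectedComponentIn {w | lam ≤ h w} y) := by
    intro y z lam _ hz hlt
    have hopen : {w | lam < h w} ∈ nhds z :=
      (isOpen_lt continuous_const hcont).mem_nhds hlt
    obtain ⟨U, hUnhds, hUconn, hUsub⟩ :=
      locallyConnectedSpace_iff_connected_subsets.mp ‹LocallyConnectedSpace I› z
        _ hopen
    rw [mem_interior_iff_mem_nhds]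
    refine Filter.mem_of_superset hUnhds ?_
    have hUsub' : U ⊆ {w | lam ≤ h w} := fun w hw => le_of_lt (show lam < h w from hUsub hw)
    have : U ⊆ connectedComponentIn {w | lam ≤ h w} z :=
      hUconn.subset_connectedComponentIn (mem_of_mem_nhds hUnhds) hUsub'
    rwa [connectedComponentIn_eq hz]
  refine ⟨key, fun x x' lam lam' hx hx' hll hsub => ?_⟩
  rw [← subset_interior_iff_mem_nhdsSet]
  intro z hz
  have : lam' ≤ h z := connectedComponentIn_subset {w | lam' ≤ h w} x' hz
  exact key x z lam hx (hsub hz) (lt_of_lt_of_le hll this)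
end

section
/- Let I be a locally connected topological space, h : I → ℝ continuous attaining its infimum at v ∈ I. For fixed y ∈ I, the function z ↦ Λ(y,z) is lower semicontinuous on I: for every z₀ ∈ I, liminf_{z → z₀} Λ(y,z) ≥ Λ(y,z₀). -/
/-- `Λ(y,z)`: the supremum of levels `μ ≤ min (h y) (h z)` at which the
contours of `y` and `z` agree. -/
noncomputable def contourLambda {I : Type*} [TopologicalSpace I] (h : I → ℝ)
    (y z : I) : ℝ :=
  sSup {μ : ℝ | μ ≤ h y ∧ μ ≤ h z ∧
    connectedComponentIn {w | μ ≤ h w} y = connectedComponentIn {w | μ ≤ h w} z}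

/-- The contour pseudo-metric `d(x,y) = h x + h y - 2 Λ(x,y)`. -/
noncomputable def contourDist {I : Type*} [TopologicalSpace I] (h : I → ℝ)
    (x y : I) : ℝ :=
  h x + h y - 2 * contourLambda h x y

/-- For fixed `y`, the map `z ↦ Λ(y,z)` is lower semicontinuous. -/
theorem lowerSemicontinuous_contourLambda
    {I : Type*} [TopologicalSpace I] [LocallyConnectedSpace I]
    (h : I → ℝ) (hcont : Continuous h)
    (v : I) (hv : ∀ y, h v ≤ h y) (y : I) :
    LowerSemicontinuous (fun z => contourLambda h y z) := by
  intro z₀ lam hlam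
  set S : I → Set ℝ := fun z => {μ : ℝ | μ ≤ h y ∧ μ ≤ h z ∧
    connectedComponentIn {w | μ ≤ h w} y = connectedComponentIn {w | μ ≤ h w} z} with hSdef
  have hbdd : ∀ z, BddAbove (S z) := fun z => ⟨h y, fun μ hμ => hμ.1⟩
  have hkey : ∀ z μ, μ ∈ S z → connectedComponent y = connectedComponent z := by
    intro z μ hμ
    have hy : y ∈ connectedComponentIn {w | μ ≤ h w} y := mem_connectedComponentIn hμ.1
    rw [hμ.2.2] at hy
    have hsub : connectedComponentIn {w | μ ≤ h w} z ⊆ connectedComponent z :=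
      isPreconnected_connectedComponentIn.subset_connectedComponent
        (mem_connectedComponentIn (show z ∈ {w | μ ≤ h w} from hμ.2.1))
    have hy' : y ∈ connectedComponent z := hsub hy
    exact (connectedComponent_eq hy').symm
  by_cases hcc : connectedComponent y = connectedComponent z₀
  · have hne : (S z₀).Nonempty := by
      refine ⟨h v, hv y, hv z₀, ?_⟩
      have huniv : {w : I | h v ≤ h w} = Set.univ := Set.eq_univ_of_forall fun w => hv w
      rw [huniv, connectedComponentIn_univ, connectedComponentIn_univ, hcc]
    have hlam' : lam < sSup (S z₀) := hlam
    obtain ⟨μ, hμS, hlamμ⟩ := exists_lt_of_lt_csSup hne hlam'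
    obtain ⟨ν, hlamν, hνμ⟩ := exists_between hlamμ
    have hOopen : IsOpen {w : I | ν < h w} := isOpen_lt continuous_const hcont
    have hz₀O : z₀ ∈ {w : I | ν < h w} := lt_of_lt_of_le hνμ hμS.2.1
    have hU : IsOpen (connectedComponentIn {w : I | ν < h w} z₀) := hOopen.connectedComponentIn
    filter_upwards [hU.mem_nhds (mem_connectedComponentIn hz₀O)] with z hz
    have hsub : connectedComponentIn {w : I | ν < h w} z₀ ⊆
        connectedComponentIn {w : I | ν ≤ h w} z₀ :=
      connectedComponentIn_mono _ (fun w (hw : ν < h w) => le_of_lt hw)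
    have hz' : z ∈ connectedComponentIn {w : I | ν ≤ h w} z₀ := hsub hz
    have heqz : connectedComponentIn {w : I | ν ≤ h w} z =
        connectedComponentIn {w : I | ν ≤ h w} z₀ := (connectedComponentIn_eq hz').symm
    have hz₀y : z₀ ∈ connectedComponentIn {w : I | ν ≤ h w} y := by
      have h1 : z₀ ∈ connectedComponentIn {w : I | μ ≤ h w} y := by
        rw [hμS.2.2]; exact mem_connectedComponentIn hμS.2.1
      exact connectedComponentIn_mono _ (fun w hw => le_trans hνμ.le hw) h1
    have heqy : connectedComponentIn {w : I | ν ≤ h w} y =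
        connectedComponentIn {w : I | ν ≤ h w} z₀ := connectedComponentIn_eq hz₀y
    have hνz : ν ≤ h z := le_of_lt (connectedComponentIn_subset {w : I | ν < h w} z₀ hz)
    have hνS : ν ∈ S z := ⟨le_trans hνμ.le hμS.1, hνz, heqy.trans heqz.symm⟩
    exact lt_of_lt_of_le hlamν (le_csSup (hbdd z) hνS)
  · have hS0 : S z₀ = ∅ := by
      rw [Set.eq_empty_iff_forall_notMem]
      intro μ hμ; exact hcc (hkey z₀ μ hμ)
    have h0 : contourLambda h y z₀ = 0 := by
      show sSup (S z₀) = 0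
      rw [hS0, Real.sSup_empty]
    rw [show (fun z => contourLambda h y z) z₀ = 0 from h0] at hlam
    filter_upwards [isOpen_connectedComponent.mem_nhds
      (show z₀ ∈ connectedComponent z₀ from mem_connectedComponent)] with z hz
    have hccz : connectedComponent z = connectedComponent z₀ := (connectedComponent_eq hz).symm
    have hSz : S z = ∅ := by
      rw [Set.eq_empty_iff_forall_notMem]
      intro μ hμ; exact hcc ((hkey z μ hμ).trans hccz)
    show lam < sSup (S z)
    rw [hSz, Real.sSup_empty]
    exact hlam
end

section
/- Let I be a locally connected topological space and h : I → ℝ continuous, attaining its infimum at v ∈ I. Then the projection to the pseudo-metric d is continuous from the topology of I: for every y ∈ I and every ε > 0 there is a neighbourhood U of y such that d(y,z) < ε for all z ∈ U; equivalently, the function z ↦ d(y,z) tends to 0 as z → y in I. -/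
/-- Continuity of the projection to the pseudo-metric: for every `y` and
`ε > 0` there is a neighbourhood `U` of `y` on which `d(y,z) < ε`. -/
theorem contourDist_continuous_at
    {I : Type*} [TopologicalSpace I] [LocallyConnectedSpace I]
    (h : I → ℝ) (hcont : Continuous h)
    (v : I) (hv : ∀ y, h v ≤ h y) :
    ∀ y : I, ∀ ε > (0 : ℝ), ∃ U ∈ nhds y, ∀ z ∈ U, contourDist h y z < ε := by
  intro y ε hε
  have hV : h ⁻¹' Set.Ioo (h y - ε/4) (h y + ε/4) ∈ nhds y := by
    apply (isOpen_Ioo.preimage hcont).mem_nhds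
    constructor <;> simp <;> linarith
  obtain ⟨U, ⟨hUopen, hyU, hUconn⟩, hUsub⟩ :=
    (LocallyConnectedSpace.open_connected_basis y).mem_iff.mp hV
  refine ⟨U, hUopen.mem_nhds hyU, fun z hz => ?_⟩
  have hyV := hUsub hyU
  have hzV := hUsub hz
  simp only [Set.mem_preimage, Set.mem_Ioo, id] at hyV hzV
  have hmem : (h y - ε/4) ∈ {μ : ℝ | μ ≤ h y ∧ μ ≤ h z ∧
      connectedComponentIn {w | μ ≤ h w} y = connectedComponentIn {w | μ ≤ h w} z} := by
    refine ⟨by linarith, by linarith, ?_⟩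
    have hUS : U ⊆ {w | h y - ε/4 ≤ h w} := fun w hw => le_of_lt (hUsub hw).1
    have hzc : z ∈ connectedComponentIn {w | h y - ε/4 ≤ h w} y :=
      hUconn.isPreconnected.subset_connectedComponentIn hyU hUS hz
    exact connectedComponentIn_eq hzc
  have hbdd : BddAbove {μ : ℝ | μ ≤ h y ∧ μ ≤ h z ∧
      connectedComponentIn {w | μ ≤ h w} y = connectedComponentIn {w | μ ≤ h w} z} :=
    ⟨h y, fun a ha => ha.1⟩
  have hΛ : h y - ε/4 ≤ contourLambda h y z := le_csSup hbdd hmem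
  have heq : contourDist h y z = h y + h z - 2 * contourLambda h y z := rfl
  rw [heq]
  have : h z < h y + ε/4 := hzV.2
  linarith
end

section
/- Let I be a compact, locally connected topological space and h : I → ℝ continuous, attaining its infimum at v ∈ I. Then I is totally bounded with respect to the pseudo-metric d: for every ε > 0 there is a finite set F ⊆ I such that every x ∈ I satisfies d(x,y) < ε for some y ∈ F. (Hence the quotient metric space obtained by identifying points at d-distance zero is a compact metric space.) -/
/-- If `I` is compact then it is totally bounded for the contour
pseudo-metric `d`. -/
theorem contourDist_totallyBounded
    {I : Type*} [TopologicalSpace I] [CompactSpace I] [LocallyConnectedSpace I]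
    (h : I → ℝ) (hcont : Continuous h)
    (v : I) (hv : ∀ y, h v ≤ h y) :
    ∀ ε > (0 : ℝ), ∃ F : Finset I, ∀ x : I, ∃ y ∈ F, contourDist h x y < ε := by
  intro ε hε
  set V : I → Set I := fun a => h ⁻¹' Set.Ioo (h a - ε/4) (h a + ε/4) with hVdef
  have hVopen : ∀ a, IsOpen (V a) := fun a => isOpen_Ioo.preimage hcont
  have hmemV : ∀ a, a ∈ V a := by
    intro a; simp only [hVdef, Set.mem_preimage, Set.mem_Ioo]
    constructor <;> linarith
  set U : I → Set I := fun a => connectedComponentIn (V a) a with hUdef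
  have hUopen : ∀ a, IsOpen (U a) := fun a => (hVopen a).connectedComponentIn
  have hmemU : ∀ a, a ∈ U a := fun a => mem_connectedComponentIn (hmemV a)
  obtain ⟨t, ht⟩ := isCompact_univ.elim_finite_subcover U hUopen
    (fun x _ => Set.mem_iUnion.mpr ⟨x, hmemU x⟩)
  refine ⟨t, fun x => ?_⟩
  obtain ⟨i, hit, hxU⟩ := Set.mem_iUnion₂.mp (ht (Set.mem_univ x))
  refine ⟨i, hit, ?_⟩
  set μ := h i - ε/4 with hμdef
  clear_value μ
  have hxV : x ∈ V i := connectedComponentIn_subset _ _ hxU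
  have hx1 : h i - ε/4 < h x := (Set.mem_preimage.mp hxV).1
  have hx2 : h x < h i + ε/4 := (Set.mem_preimage.mp hxV).2
  have hUsub : U i ⊆ {w | μ ≤ h w} := fun w hw => by
    have := (connectedComponentIn_subset (V i) i hw)
    have : h i - ε/4 < h w := (Set.mem_preimage.mp this).1
    rw [hμdef]; exact le_of_lt this
  have hcc : connectedComponentIn {w | μ ≤ h w} x = connectedComponentIn {w | μ ≤ h w} i := by
    have hsub : U i ⊆ connectedComponentIn {w | μ ≤ h w} x :=
      isPreconnected_connectedComponentIn.subset_connectedComponentIn hxU hUsub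
    exact connectedComponentIn_eq (hsub (hmemU i))
  have hmem : μ ∈ {μ : ℝ | μ ≤ h x ∧ μ ≤ h i ∧
      connectedComponentIn {w | μ ≤ h w} x = connectedComponentIn {w | μ ≤ h w} i} :=
    ⟨by linarith, by linarith, hcc⟩
  have hbdd : BddAbove {μ : ℝ | μ ≤ h x ∧ μ ≤ h i ∧
      connectedComponentIn {w | μ ≤ h w} x = connectedComponentIn {w | μ ≤ h w} i} :=
    ⟨h x, fun μ hμ => hμ.1⟩
  have hΛ : μ ≤ contourLambda h x i := le_csSup hbdd hmem
  have : contourDist h x i = h x + h i - 2 * contourLambda h x i := rfl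
  rw [this]
  linarith
end

section
/- Let I be a connected and locally connected topological space and h : I → ℝ continuous, attaining its infimum at v ∈ I. Then for every x ∈ I there exists a map γ : [h(v), h(x)] → I such that h(γ(λ)) = λ for all λ ∈ [h(v), h(x)], d(γ(λ), γ(μ)) = |λ − μ| for all λ, μ ∈ [h(v), h(x)], d(γ(h(v)), v) = 0, and d(γ(h(x)), x) = 0; i.e. in the contour pseudo-metric there is an isometrically embedded segment from the root v to x of length h(x) − h(v). -/
open Set

section Aux

variable {I : Type*} [TopologicalSpace I]

/-- The contour of `x` at level `lam` contains a point of height exactly `lam`,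
provided `h v ≤ lam ≤ h x` where `v` is a global minimum. -/
lemma exists_level_point [ConnectedSpace I] [LocallyConnectedSpace I]
    (h : I → ℝ) (hcont : Continuous h) (v : I) (hv : ∀ y, h v ≤ h y)
    (x : I) (lam : ℝ) (h1 : h v ≤ lam) (h2 : lam ≤ h x) :
    ∃ w ∈ connectedComponentIn {w | lam ≤ h w} x, h w = lam := by
  set S := {w : I | lam ≤ h w} with hSdef
  have hSclosed : IsClosed S := isClosed_Ici.preimage hcont
  have hxS : x ∈ S := h2
  set C := connectedComponentIn S x with hCdef
  have hCS : C ⊆ S := connectedComponentIn_subset _ _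
  have hxC : x ∈ C := mem_connectedComponentIn hxS
  have hCpre : IsPreconnected C := isPreconnected_connectedComponentIn
  have hCclosed : IsClosed C := by
    have hcl : closure C ⊆ C :=
      hCpre.closure.subset_connectedComponentIn (subset_closure hxC)
        (closure_minimal hCS hSclosed)
    exact isClosed_of_closure_subset hcl
  by_contra hcon
  push_neg at hcon
  have hCU : C ⊆ {w | lam < h w} := by
    intro w hw
    exact lt_of_le_of_ne (hCS hw) (fun e => hcon w hw e.symm)
  have hUopen : IsOpen {w : I | lam < h w} := isOpen_lt continuous_const hcont
  set C' := connectedComponentIn {w : I | lam < h w} x with hC'def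
  have hC'open : IsOpen C' := hUopen.connectedComponentIn
  have hsub1 : C ⊆ C' := hCpre.subset_connectedComponentIn hxC hCU
  have hsub2 : C' ⊆ C := by
    apply isPreconnected_connectedComponentIn.subset_connectedComponentIn
      (mem_connectedComponentIn (hCU hxC))
    intro w hw
    have := connectedComponentIn_subset _ _ hw
    simp only [mem_setOf_eq] at this ⊢
    exact this.le
  have hEq : C' = C := le_antisymm hsub2 hsub1
  have hClopen : IsClopen C := ⟨hCclosed, hEq ▸ hC'open⟩
  have hCuniv : C = univ := hClopen.eq_univ ⟨x, hxC⟩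
  exact absurd h1 (not_le.mpr (hCU (hCuniv ▸ mem_univ v)))

/-- Monotonicity of contours: lower level gives bigger contour. -/
lemma contour_mono (h : I → ℝ) (x : I) {t lam : ℝ} (ht : t ≤ lam) (h2 : lam ≤ h x) :
    connectedComponentIn {w | lam ≤ h w} x ⊆ connectedComponentIn {w | t ≤ h w} x := by
  apply isPreconnected_connectedComponentIn.subset_connectedComponentIn
    (mem_connectedComponentIn (show x ∈ {w | lam ≤ h w} from h2))
  intro w hw
  have := connectedComponentIn_subset _ _ hw
  simp only [mem_setOf_eq] at this ⊢
  exact ht.trans this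

/-- Computation of `contourLambda` when the contours agree exactly at the
minimum of the two heights. -/
lemma contourLambda_eq (h : I → ℝ) (a b : I) (la lb : ℝ)
    (ha : h a = la) (hb : h b = lb)
    (heq : connectedComponentIn {w | min la lb ≤ h w} a
         = connectedComponentIn {w | min la lb ≤ h w} b) :
    contourLambda h a b = min la lb := by
  have hub : ∀ t ∈ {μ : ℝ | μ ≤ h a ∧ μ ≤ h b ∧
      connectedComponentIn {w | μ ≤ h w} a = connectedComponentIn {w | μ ≤ h w} b},
      t ≤ min la lb := by
    rintro t ⟨h1, h2, -⟩
    exact le_min (ha ▸ h1) (hb ▸ h2)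
  have hmem : min la lb ∈ {μ : ℝ | μ ≤ h a ∧ μ ≤ h b ∧
      connectedComponentIn {w | μ ≤ h w} a = connectedComponentIn {w | μ ≤ h w} b} :=
    ⟨ha ▸ min_le_left _ _, hb ▸ min_le_right _ _, heq⟩
  exact le_antisymm (csSup_le ⟨_, hmem⟩ hub) (le_csSup ⟨min la lb, hub⟩ hmem)

end Aux

/-- In the contour pseudo-metric there is an isometrically embedded segment
from the root `v` to any point `x`, parametrised by height. -/
theorem exists_isometric_segment_root_to_point
    {I : Type*} [TopologicalSpace I] [ConnectedSpace I] [LocallyConnectedSpace I]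
    (h : I → ℝ) (hcont : Continuous h)
    (v : I) (hv : ∀ y, h v ≤ h y) (x : I) :
    ∃ γ : ℝ → I,
      (∀ lam ∈ Set.Icc (h v) (h x), h (γ lam) = lam) ∧
      (∀ lam ∈ Set.Icc (h v) (h x), ∀ mu ∈ Set.Icc (h v) (h x),
        contourDist h (γ lam) (γ mu) = |lam - mu|) ∧
      contourDist h (γ (h v)) v = 0 ∧
      contourDist h (γ (h x)) x = 0 := by
  have key : ∀ lam : ℝ, ∃ w : I, lam ∈ Set.Icc (h v) (h x) →
      w ∈ connectedComponentIn {w | lam ≤ h w} x ∧ h w = lam := by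
    intro lam
    by_cases hl : lam ∈ Set.Icc (h v) (h x)
    · obtain ⟨w, hw1, hw2⟩ := exists_level_point h hcont v hv x lam hl.1 hl.2
      exact ⟨w, fun _ => ⟨hw1, hw2⟩⟩
    · exact ⟨x, fun hl' => absurd hl' hl⟩
  choose γ hγ using key
  have hγh : ∀ lam ∈ Set.Icc (h v) (h x), h (γ lam) = lam := fun lam hl => (hγ lam hl).2
  have hγC : ∀ lam ∈ Set.Icc (h v) (h x),
      γ lam ∈ connectedComponentIn {w | lam ≤ h w} x := fun lam hl => (hγ lam hl).1
  -- the comparison of the contours of γ lam and γ mu at level min lam mu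
  have hcomp : ∀ lam ∈ Set.Icc (h v) (h x), ∀ mu ∈ Set.Icc (h v) (h x),
      contourLambda h (γ lam) (γ mu) = min lam mu := by
    intro lam hlam mu hmu
    have hmam : γ lam ∈ connectedComponentIn {w | min lam mu ≤ h w} x :=
      contour_mono h x (min_le_left _ _) hlam.2 (hγC lam hlam)
    have hmbm : γ mu ∈ connectedComponentIn {w | min lam mu ≤ h w} x :=
      contour_mono h x (min_le_right _ _) hmu.2 (hγC mu hmu)
    exact contourLambda_eq h (γ lam) (γ mu) lam mu (hγh lam hlam) (hγh mu hmu)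
      ((connectedComponentIn_eq hmam).symm.trans (connectedComponentIn_eq hmbm))
  have hvx : h v ≤ h x := hv x
  have hvIcc : h v ∈ Set.Icc (h v) (h x) := ⟨le_refl _, hvx⟩
  have hxIcc : h x ∈ Set.Icc (h v) (h x) := ⟨hvx, le_refl _⟩
  refine ⟨γ, hγh, ?_, ?_, ?_⟩
  · intro lam hlam mu hmu
    have := hcomp lam hlam mu hmu
    unfold contourDist
    rw [this, hγh lam hlam, hγh mu hmu]
    rcases le_total lam mu with hc | hc
    · rw [min_eq_left hc, abs_of_nonpos (by linarith)]; ring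
    · rw [min_eq_right hc, abs_of_nonneg (by linarith)]; ring
  · -- segment start: γ (h v) and v
    have hset : {w : I | h v ≤ h w} = Set.univ := by
      ext w; simp [hv w]
    have heq : connectedComponentIn {w | min (h v) (h v) ≤ h w} (γ (h v))
        = connectedComponentIn {w | min (h v) (h v) ≤ h w} v := by
      rw [min_self, hset, connectedComponentIn_univ, connectedComponentIn_univ,
        PreconnectedSpace.connectedComponent_eq_univ, PreconnectedSpace.connectedComponent_eq_univ]
    have hL : contourLambda h (γ (h v)) v = h v := by
      have := contourLambda_eq h (γ (h v)) v (h v) (h v) (hγh _ hvIcc) rfl heq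
      rwa [min_self] at this
    unfold contourDist
    rw [hL, hγh _ hvIcc]; ring
  · -- segment end: γ (h x) and x
    have hmem : γ (h x) ∈ connectedComponentIn {w | h x ≤ h w} x := hγC _ hxIcc
    have heq : connectedComponentIn {w | min (h x) (h x) ≤ h w} (γ (h x))
        = connectedComponentIn {w | min (h x) (h x) ≤ h w} x := by
      rw [min_self]
      exact (connectedComponentIn_eq hmem).symm
    have hL : contourLambda h (γ (h x)) x = h x := by
      have := contourLambda_eq h (γ (h x)) x (h x) (h x) (hγh _ hxIcc) rfl heq
      rwa [min_self] at this
    unfold contourDist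
    rw [hL, hγh _ hxIcc]; ring
end
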